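/- Let M be an n×n symmetric positive-definite matrix, λ > 0, and let A : [0,∞) → ℝ^{n×n} be continuous with A(t)ᵀM + MA(t) ⪯ −λM for all t ≥ 0. Let d : [0,∞) → ℝ^n be continuous with Euclidean norm ‖d(t)‖ ≤ d̄ for all t, and let x : [0,∞) → ℝ^n be differentiable with ẋ(t) = A(t)x(t) + d(t) and x(0) = 0. Then for all t ≥ 0, ‖x(t)‖ ≤ (2/λ)·√(λ_max(M)/λ_min(M))·d̄, where λ_max(M) and λ_min(M) are the largest and smallest eigenvalues of M. -/

import Mathlib

open Matrix Real Set

noncomputable def euclidNorm {ι : Type*} [Fintype ι] (x : ι → ℝ) : ℝ :=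
  Real.sqrt (x ⬝ᵥ x)

/-!
For `V = xᵀMx`, the contraction hypothesis together with the weighted AM–GM bound
`2xᵀMd ≤ (λ/2)xᵀMx + (2/λ)dᵀMd` gives `V' ≤ (λ/2)(λ_max (2d̄/λ)² − V)`. As `V 0 = 0`, a barrier
argument keeps `V` below `λ_max (2d̄/λ)²`, and `λ_min ‖x‖² ≤ V` turns this into the bound on `‖x‖`.
The Rayleigh bounds `λ_min ‖v‖² ≤ vᵀMv ≤ λ_max ‖v‖²` hold because the spectral theorem
conjugates `M − c • 1` to the diagonal matrix of the shifted eigenvalues.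
-/

open scoped ComplexOrder

namespace Matrix

theorem IsSymm.dotProduct_mulVec_comm {n R : Type*} [Fintype n] [CommSemiring R]
    {M : Matrix n n R} (hM : M.IsSymm) (x y : n → R) : x ⬝ᵥ M *ᵥ y = y ⬝ᵥ M *ᵥ x := by
  rw [dotProduct_mulVec, ← mulVec_transpose, hM.eq, dotProduct_comm]

namespace IsHermitian

section RCLike

variable {𝕜 n : Type*} [RCLike 𝕜] [Fintype n] [DecidableEq n] {A : Matrix n n 𝕜}

theorem sub_smul_one_eq_conj (hA : A.IsHermitian) (c : ℝ) :
    A - c • (1 : Matrix n n 𝕜) = hA.eigenvectorUnitary *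
      diagonal (fun i => ((hA.eigenvalues i - c : ℝ) : 𝕜)) *
        star (hA.eigenvectorUnitary : Matrix n n 𝕜) := by
  have hdiag : diagonal (RCLike.ofReal ∘ hA.eigenvalues) - c • (1 : Matrix n n 𝕜) =
      diagonal fun i => ((hA.eigenvalues i - c : ℝ) : 𝕜) := by
    ext i j
    rcases eq_or_ne i j with rfl | hij <;> simp [*, Algebra.algebraMap_eq_smul_one, sub_smul]
  conv_lhs => rw [hA.spectral_theorem]
  rw [Unitary.conjStarAlgAut_apply, ← hdiag, mul_sub, sub_mul, mul_smul_comm, mul_one,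
    smul_mul_assoc, Unitary.mul_star_self_of_mem hA.eigenvectorUnitary.2]

theorem posSemidef_sub_smul_one (hA : A.IsHermitian) {c : ℝ} (hc : ∀ i, c ≤ hA.eigenvalues i) :
    (A - c • (1 : Matrix n n 𝕜)).PosSemidef := by
  rw [hA.sub_smul_one_eq_conj, Unitary.isUnit_coe.posSemidef_star_right_conjugate_iff,
    posSemidef_diagonal_iff]
  intro i
  simpa using hc i

theorem posSemidef_smul_one_sub (hA : A.IsHermitian) {c : ℝ} (hc : ∀ i, hA.eigenvalues i ≤ c) :
    (c • (1 : Matrix n n 𝕜) - A).PosSemidef := by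
  rw [← neg_sub, hA.sub_smul_one_eq_conj, ← neg_mul, ← mul_neg, diagonal_neg,
    Unitary.isUnit_coe.posSemidef_star_right_conjugate_iff, posSemidef_diagonal_iff]
  intro i
  simpa using hc i

end RCLike

variable {n : Type*} [Fintype n] [DecidableEq n] {A : Matrix n n ℝ}

theorem mul_dotProduct_self_le_dotProduct_mulVec (hA : A.IsHermitian) {c : ℝ}
    (hc : ∀ i, c ≤ hA.eigenvalues i) (x : n → ℝ) : c * (x ⬝ᵥ x) ≤ x ⬝ᵥ A *ᵥ x := by
  have := (hA.posSemidef_sub_smul_one hc).dotProduct_mulVec_nonneg x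
  simpa [sub_mulVec, smul_mulVec, dotProduct_sub] using this

theorem dotProduct_mulVec_le_mul_dotProduct_self (hA : A.IsHermitian) {c : ℝ}
    (hc : ∀ i, hA.eigenvalues i ≤ c) (x : n → ℝ) : x ⬝ᵥ A *ᵥ x ≤ c * (x ⬝ᵥ x) := by
  have := (hA.posSemidef_smul_one_sub hc).dotProduct_mulVec_nonneg x
  simpa [sub_mulVec, smul_mulVec, dotProduct_sub] using this

end IsHermitian

theorem PosSemidef.two_mul_dotProduct_mulVec_le {n : Type*} [Fintype n] {A : Matrix n n ℝ}
    (hA : A.PosSemidef) {μ : ℝ} (hμ : 0 < μ) (x y : n → ℝ) :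
    2 * (x ⬝ᵥ A *ᵥ y) ≤ μ * (x ⬝ᵥ A *ᵥ x) + μ⁻¹ * (y ⬝ᵥ A *ᵥ y) := by
  have hsymm := isHermitian_iff_isSymm.mp hA.1
  have := hA.dotProduct_mulVec_nonneg (μ • x - y)
  simp only [star_trivial, mulVec_sub, mulVec_smul, dotProduct_sub, sub_dotProduct,
    dotProduct_smul, smul_dotProduct, smul_eq_mul, hsymm.dotProduct_mulVec_comm y x] at this
  field_simp
  nlinarith

end Matrix

section Deriv

variable {𝕜 m n : Type*} [NontriviallyNormedField 𝕜] [Fintype n] {f g : 𝕜 → n → 𝕜}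
  {f' g' : n → 𝕜} {t : 𝕜}

theorem HasDerivAt.dotProduct (hf : HasDerivAt f f' t) (hg : HasDerivAt g g' t) :
    HasDerivAt (fun s => f s ⬝ᵥ g s) (f' ⬝ᵥ g t + f t ⬝ᵥ g') t := by
  unfold _root_.dotProduct
  rw [← Finset.sum_add_distrib]
  exact HasDerivAt.fun_sum fun i _ => (hasDerivAt_pi.1 hf i).mul (hasDerivAt_pi.1 hg i)

theorem HasDerivAt.mulVec (A : Matrix m n 𝕜) (hf : HasDerivAt f f' t) :
    HasDerivAt (fun s => A *ᵥ f s) (A *ᵥ f') t :=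
  hasDerivAt_pi.2 fun i => by
    have := (hasDerivAt_const t (A i)).dotProduct hf
    rw [zero_dotProduct, zero_add] at this
    exact this

end Deriv

theorem le_of_hasDerivAt_le_mul_sub {f f' : ℝ → ℝ} {a k b : ℝ} (hk : 0 < k)
    (hf : ∀ t ≥ a, HasDerivAt f (f' t) t) (hf' : ∀ t ≥ a, f' t ≤ k * (b - f t)) (ha : f a ≤ b) :
    ∀ t ≥ a, f t ≤ b := by
  intro t ht
  refine le_of_forall_gt_imp_ge_of_dense fun B hB => ?_
  refine image_le_of_deriv_right_lt_deriv_boundary (B := fun _ => B) (B' := 0)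
    (fun s hs => (hf s hs.1).continuousAt.continuousWithinAt)
    (fun s hs => (hf s hs.1).hasDerivWithinAt) (ha.trans hB.le) (fun _ => hasDerivAt_const _ _)
    (fun s hs hsB => ?_) ⟨ht, le_rfl⟩
  calc f' s ≤ k * (b - f s) := hf' s hs.1
    _ < 0 := mul_neg_of_pos_of_neg hk (by linarith)

theorem lyapunov_derivative_le {n : Type*} [Fintype n] {M A : Matrix n n ℝ} (hM : M.PosSemidef)
    {lam : ℝ} (hlam : 0 < lam) (hcontr : (-(lam • M) - (Aᵀ * M + M * A)).PosSemidef)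
    (x d : n → ℝ) :
    (A *ᵥ x + d) ⬝ᵥ M *ᵥ x + x ⬝ᵥ M *ᵥ (A *ᵥ x + d) ≤
      lam / 2 * ((2 / lam) ^ 2 * (d ⬝ᵥ M *ᵥ d) - x ⬝ᵥ M *ᵥ x) := by
  have hdecay := hcontr.dotProduct_mulVec_nonneg x
  simp only [star_trivial, sub_mulVec, neg_mulVec, smul_mulVec, add_mulVec, ← mulVec_mulVec,
    dotProduct_sub, dotProduct_neg, dotProduct_smul, dotProduct_add, smul_eq_mul] at hdecay
  have hcross := hM.two_mul_dotProduct_mulVec_le (half_pos hlam) x d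
  have hweight : (lam / 2)⁻¹ = lam / 2 * (2 / lam) ^ 2 := by field_simp
  have htranspose : A *ᵥ x ⬝ᵥ M *ᵥ x = x ⬝ᵥ Aᵀ *ᵥ M *ᵥ x := by
    rw [dotProduct_mulVec x, vecMul_transpose]
  rw [add_dotProduct, mulVec_add, dotProduct_add, htranspose,
    (isHermitian_iff_isSymm.mp hM.1).dotProduct_mulVec_comm d x]
  rw [hweight] at hcross
  linarith

theorem euclidNorm_le_of_dotProduct_mulVec_le {ι : Type*} [Fintype ι] [DecidableEq ι]
    {M : Matrix ι ι ℝ} (hM : M.PosDef) {v : ι → ℝ} {r : ℝ} (hr : 0 ≤ r)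
    (hv : v ⬝ᵥ M *ᵥ v ≤ (⨆ i, hM.1.eigenvalues i) * r ^ 2) :
    euclidNorm v ≤ Real.sqrt ((⨆ i, hM.1.eigenvalues i) / (⨅ i, hM.1.eigenvalues i)) * r := by
  rcases isEmpty_or_nonempty ι with _ | _
  · simp only [euclidNorm, dotProduct, Finset.univ_eq_empty, Finset.sum_empty, Real.sqrt_zero]
    positivity
  set lmax := ⨆ i, hM.1.eigenvalues i
  set lmin := ⨅ i, hM.1.eigenvalues i
  have hlmin : 0 < lmin := by
    obtain ⟨i, hi⟩ := exists_eq_ciInf_of_finite (f := hM.1.eigenvalues)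
    exact (hM.eigenvalues_pos i).trans_eq hi
  have hlmax : 0 ≤ lmax := Real.iSup_nonneg fun i => (hM.eigenvalues_pos i).le
  have hlower := hM.1.mul_dotProduct_self_le_dotProduct_mulVec
    (fun i => ciInf_le (Finite.bddBelow_range _) i) v
  rw [euclidNorm, Real.sqrt_le_left (by positivity), mul_pow, Real.sq_sqrt (by positivity),
    div_mul_eq_mul_div, le_div_iff₀ hlmin, mul_comm]
  exact hlower.trans hv

theorem perturbed_contracting_system_bound_general
    {n : ℕ} (M : Matrix (Fin n) (Fin n) ℝ) (hM : M.PosDef)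
    (lam : ℝ) (hlam : 0 < lam)
    (A : ℝ → Matrix (Fin n) (Fin n) ℝ)
    (hcontr : ∀ t ≥ (0:ℝ), (-(lam • M) - ((A t)ᵀ * M + M * A t)).PosSemidef)
    (dbar : ℝ) (d : ℝ → Fin n → ℝ)
    (hdbd : ∀ t ≥ (0:ℝ), euclidNorm (d t) ≤ dbar)
    (x : ℝ → Fin n → ℝ)
    (hx : ∀ t ≥ (0:ℝ), HasDerivAt x ((A t).mulVec (x t) + d t) t)
    (hx0 : x 0 = 0) :
    ∀ t ≥ (0:ℝ), euclidNorm (x t) ≤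
      (2 / lam) * Real.sqrt ((⨆ i, hM.1.eigenvalues i) / (⨅ i, hM.1.eigenvalues i)) * dbar := by
  intro t ht
  set lmax := ⨆ i, hM.1.eigenvalues i
  have hdbar : 0 ≤ dbar := (Real.sqrt_nonneg _).trans (hdbd 0 le_rfl)
  have hlmax : 0 ≤ lmax := Real.iSup_nonneg fun i => (hM.eigenvalues_pos i).le
  have hV' : ∀ s ≥ (0:ℝ), (A s *ᵥ x s + d s) ⬝ᵥ M *ᵥ x s + x s ⬝ᵥ M *ᵥ (A s *ᵥ x s + d s) ≤
      lam / 2 * (lmax * (2 / lam * dbar) ^ 2 - x s ⬝ᵥ M *ᵥ x s) := by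
    intro s hs
    have hd : d s ⬝ᵥ d s ≤ dbar ^ 2 := (Real.sqrt_le_left hdbar).1 (hdbd s hs)
    have hdM := hM.1.dotProduct_mulVec_le_mul_dotProduct_self
      (fun i => le_ciSup (Finite.bddAbove_range _) i) (d s)
    refine (lyapunov_derivative_le hM.posSemidef hlam (hcontr s hs) (x s) (d s)).trans ?_
    gcongr lam / 2 * (?_ - _)
    calc (2 / lam) ^ 2 * (d s ⬝ᵥ M *ᵥ d s) ≤ (2 / lam) ^ 2 * (lmax * dbar ^ 2) := by
          gcongr
          exact hdM.trans (by gcongr)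
      _ = lmax * (2 / lam * dbar) ^ 2 := by ring
  have hV := le_of_hasDerivAt_le_mul_sub (half_pos hlam)
    (fun s hs => (hx s hs).dotProduct ((hx s hs).mulVec M)) hV' (by simp [hx0]; positivity) t ht
  calc euclidNorm (x t) ≤ Real.sqrt (lmax / ⨅ i, hM.1.eigenvalues i) * (2 / lam * dbar) :=
        euclidNorm_le_of_dotProduct_mulVec_le hM (by positivity) hV
    _ = _ := by ring

/-- robustness of a contracting linear time-varying system to bounded
disturbances, cf. Lemma 1 of del Vecchio–Slotine as used in the paper: if
`A(t)ᵀM + MA(t) ⪯ −λM` and `ẋ = A(t)x + d(t)` with `x(0) = 0` and `‖d(t)‖ ≤ d̄`, then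
`‖x(t)‖ ≤ (2/λ)·√(λ_max(M)/λ_min(M))·d̄` for all `t ≥ 0`. -/
theorem perturbed_contracting_system_bound
    {n : ℕ} (M : Matrix (Fin n) (Fin n) ℝ) (hM : M.PosDef)
    (lam : ℝ) (hlam : 0 < lam)
    (A : ℝ → Matrix (Fin n) (Fin n) ℝ) (hAcont : Continuous A)
    (hcontr : ∀ t ≥ (0:ℝ), (-(lam • M) - ((A t)ᵀ * M + M * A t)).PosSemidef)
    (dbar : ℝ) (d : ℝ → Fin n → ℝ) (hdcont : ContinuousOn d (Ici 0))
    (hdbd : ∀ t ≥ (0:ℝ), euclidNorm (d t) ≤ dbar)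
    (x : ℝ → Fin n → ℝ)
    (hx : ∀ t ≥ (0:ℝ), HasDerivAt x ((A t).mulVec (x t) + d t) t)
    (hx0 : x 0 = 0) :
    ∀ t ≥ (0:ℝ), euclidNorm (x t) ≤
      (2 / lam) * Real.sqrt ((⨆ i, hM.1.eigenvalues i) / (⨅ i, hM.1.eigenvalues i)) * dbar :=
  perturbed_contracting_system_bound_general M hM lam hlam A hcontr dbar d hdbd x hx hx0
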